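/- Let K be a simplicial complex over ℤ/2 and σ ∈ K a simplex with no proper cofaces in K (so K∖{σ} is a complex). If σ is contained in some cycle of K, then σ is not contained in any boundary of K, and the inclusion-induced map H(K∖{σ}) → H(K) is injective but not surjective. -/

import Mathlib

/-- A simplex is a finite set of (natural-number) vertices. -/
abbrev Simplex : Type := Finset ℕ

/-- A chain over ℤ/2 (all degrees together) is a finitely supported
function from simplices to ℤ/2. -/
abbrev Chain : Type := Simplex →₀ ZMod 2

/-- A (finite) simplicial complex: a finite set of simplices closed under faces. -/
def IsComplex (K : Finset Simplex) : Prop := ∀ s ∈ K, ∀ t ⊆ s, t ∈ K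

/-- Boundary of a single simplex over ℤ/2. -/
noncomputable def bdrySimplex (s : Simplex) : Chain :=
  ∑ x ∈ s, Finsupp.single (s.erase x) 1

/-- The boundary operator on chains (all degrees), over ℤ/2. -/
noncomputable def bdry : Chain →ₗ[ZMod 2] Chain :=
  Finsupp.lsum (ZMod 2) fun s => LinearMap.toSpanSingleton (ZMod 2) Chain (bdrySimplex s)

/-- The chain group of a complex `K`: chains supported on `K`. -/
noncomputable def chainsOf (K : Finset Simplex) : Submodule (ZMod 2) Chain :=
  Finsupp.supported (ZMod 2) (ZMod 2) (↑K : Set Simplex)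

/-- The cycle group `Z(K)` (all degrees). -/
noncomputable def cyclesOf (K : Finset Simplex) : Submodule (ZMod 2) Chain :=
  chainsOf K ⊓ LinearMap.ker bdry

/-- The boundary group `B(K)` (all degrees). -/
noncomputable def bdriesOf (K : Finset Simplex) : Submodule (ZMod 2) Chain :=
  Submodule.map bdry (chainsOf K)

theorem chainsOf_mono {K K' : Finset Simplex} (h : K ⊆ K') : chainsOf K ≤ chainsOf K' :=
  Finsupp.supported_mono (by exact_mod_cast h)

theorem cyclesOf_mono {K K' : Finset Simplex} (h : K ⊆ K') : cyclesOf K ≤ cyclesOf K' :=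
  inf_le_inf_right _ (chainsOf_mono h)

theorem bdriesOf_mono {K K' : Finset Simplex} (h : K ⊆ K') : bdriesOf K ≤ bdriesOf K' :=
  Submodule.map_mono (chainsOf_mono h)

/-- `B(K)` viewed inside `Z(K)`. -/
noncomputable def homologyRel (K : Finset Simplex) : Submodule (ZMod 2) (cyclesOf K) :=
  (bdriesOf K).comap (cyclesOf K).subtype

/-- The homology `H(K) = Z(K)/B(K)` over ℤ/2, all degrees summed. -/
noncomputable abbrev homology (K : Finset Simplex) :=
  cyclesOf K ⧸ homologyRel K

/-- The inclusion-induced map on homology. -/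
noncomputable def inducedH {K K' : Finset Simplex} (h : K ⊆ K') :
    homology K →ₗ[ZMod 2] homology K' :=
  Submodule.mapQ _ _ (Submodule.inclusion (cyclesOf_mono h)) (by
    intro x hx
    simp only [homologyRel, Submodule.mem_comap, Submodule.coe_subtype,
      Submodule.coe_inclusion] at hx ⊢
    exact bdriesOf_mono h hx)

open Classical in
/-- The homology class of a chain (zero if the chain is not a cycle of `K`). -/
noncomputable def hclass (K : Finset Simplex) (c : Chain) : homology K :=
  if h : c ∈ cyclesOf K then Submodule.Quotient.mk ⟨c, h⟩ else 0


theorem eraseSubset (K : Finset Simplex) (σ : Simplex) : K.erase σ ⊆ K :=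
  fun _ hx => Finset.mem_of_mem_erase hx


/-!
A simplex `σ` with no proper cofaces never occurs in a boundary `∂τ` with `τ ∈ K`, so no boundary
of `K` involves `σ`. If moreover `z` is a cycle through `σ`, then `∂σ = ∂(z - σ)` is already a
boundary of `K ∖ {σ}`; hence `B(K) = B(K ∖ {σ})`, which gives injectivity, while the class of `z`
cannot come from `K ∖ {σ}`, since a cycle `y` there would make `y - z` a boundary of `K` through `σ`.
-/

lemma bdry_single (s : Simplex) (a : ZMod 2) : bdry (Finsupp.single s a) = a • bdrySimplex s := by
  simp [bdry, LinearMap.toSpanSingleton_apply]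

lemma bdry_eq_smul_add_bdry_erase (d : Chain) (σ : Simplex) :
    bdry d = d σ • bdrySimplex σ + bdry (d.erase σ) := by
  rw [← bdry_single, ← map_add, Finsupp.single_add_erase]

lemma bdrySimplex_apply_eq_zero {s σ : Simplex} (h : ¬ σ ⊂ s) : bdrySimplex s σ = 0 := by
  rw [bdrySimplex, Finsupp.finsetSum_apply]
  refine Finset.sum_eq_zero fun x hx => Finsupp.single_eq_of_ne ?_
  rintro rfl
  exact h (Finset.erase_ssubset hx)

lemma bdry_apply_eq_zero {K : Finset Simplex} {σ : Simplex} (hmax : ∀ τ ∈ K, σ ⊆ τ → τ = σ)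
    {d : Chain} (hd : d ∈ chainsOf K) : bdry d σ = 0 := by
  rw [bdry, Finsupp.lsum_apply, Finsupp.sum_apply, Finsupp.sum]
  refine Finset.sum_eq_zero fun s hs => ?_
  have hsK : s ∈ K := (Finsupp.mem_supported _ d).mp hd hs
  have hσs : ¬ σ ⊂ s := fun h => h.ne (hmax s hsK h.subset).symm
  simp [LinearMap.toSpanSingleton_apply, bdrySimplex_apply_eq_zero hσs]

lemma notMem_support_of_mem_bdriesOf {K : Finset Simplex} {σ : Simplex}
    (hmax : ∀ τ ∈ K, σ ⊆ τ → τ = σ) : ∀ c ∈ bdriesOf K, σ ∉ c.support := by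
  rintro c ⟨d, hd, rfl⟩
  exact Finsupp.notMem_support_iff.mpr (bdry_apply_eq_zero hmax hd)

lemma erase_mem_chainsOf_erase {K : Finset Simplex} {σ : Simplex} {d : Chain}
    (hd : d ∈ chainsOf K) : d.erase σ ∈ chainsOf (K.erase σ) := by
  rw [chainsOf, Finsupp.mem_supported, Finsupp.support_erase, Finset.coe_erase, Finset.coe_erase]
  exact Set.sdiff_subset_sdiff_left ((Finsupp.mem_supported _ d).mp hd)

lemma bdrySimplex_mem_bdriesOf_erase {K : Finset Simplex} {σ : Simplex} {z : Chain}
    (hz : z ∈ cyclesOf K) (hσz : σ ∈ z.support) : bdrySimplex σ ∈ bdriesOf (K.erase σ) := by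
  have hsum : z σ • bdrySimplex σ + bdry (z.erase σ) = 0 := by
    rw [← bdry_eq_smul_add_bdry_erase]
    exact hz.2
  have hmem : z σ • bdrySimplex σ ∈ bdriesOf (K.erase σ) := by
    rw [eq_neg_of_add_eq_zero_left hsum]
    exact neg_mem ⟨z.erase σ, erase_mem_chainsOf_erase hz.1, rfl⟩
  exact (Submodule.smul_mem_iff _ (Finsupp.mem_support_iff.mp hσz)).mp hmem

lemma bdriesOf_le_bdriesOf_erase {K : Finset Simplex} {σ : Simplex} {z : Chain}
    (hz : z ∈ cyclesOf K) (hσz : σ ∈ z.support) : bdriesOf K ≤ bdriesOf (K.erase σ) := by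
  rintro c ⟨d, hd, rfl⟩
  rw [bdry_eq_smul_add_bdry_erase d σ]
  exact add_mem (Submodule.smul_mem _ _ (bdrySimplex_mem_bdriesOf_erase hz hσz))
    ⟨d.erase σ, erase_mem_chainsOf_erase hd, rfl⟩

lemma inducedH_injective {K K' : Finset Simplex} (h : K ⊆ K') (hB : bdriesOf K' ≤ bdriesOf K) :
    Function.Injective (inducedH h) := by
  rw [injective_iff_map_eq_zero]
  rintro x hx
  obtain ⟨y, rfl⟩ := Submodule.Quotient.mk_surjective _ x
  rw [inducedH, Submodule.mapQ_apply, Submodule.Quotient.mk_eq_zero] at hx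
  exact (Submodule.Quotient.mk_eq_zero _).mpr (hB hx)

lemma inducedH_not_surjective {K K' : Finset Simplex} (h : K ⊆ K') {σ : Simplex} (hσK : σ ∉ K)
    (hB : ∀ c ∈ bdriesOf K', σ ∉ c.support) {z : Chain} (hz : z ∈ cyclesOf K')
    (hσz : σ ∈ z.support) : ¬ Function.Surjective (inducedH h) := by
  intro hsurj
  obtain ⟨q, hq⟩ := hsurj (Submodule.Quotient.mk ⟨z, hz⟩)
  obtain ⟨⟨y, hy⟩, rfl⟩ := Submodule.Quotient.mk_surjective _ q
  rw [inducedH, Submodule.mapQ_apply, Submodule.Quotient.eq] at hq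
  have hyσ : y σ = 0 :=
    Finsupp.notMem_support_iff.mp fun hσy => hσK ((Finsupp.mem_supported _ y).mp hy.1 hσy)
  refine hB (y - z) hq (Finsupp.mem_support_iff.mpr ?_)
  rw [Finsupp.sub_apply, hyσ, zero_sub, neg_ne_zero]
  exact Finsupp.mem_support_iff.mp hσz

theorem stmt14_general (K : Finset Simplex) (σ : Simplex)
    (hmax : ∀ τ ∈ K, σ ⊆ τ → τ = σ)
    (hz : ∃ z ∈ cyclesOf K, σ ∈ z.support) :
    (∀ c ∈ bdriesOf K, σ ∉ c.support) ∧
    Function.Injective (inducedH (eraseSubset K σ)) ∧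
    ¬ Function.Surjective (inducedH (eraseSubset K σ)) := by
  obtain ⟨z, hzK, hσz⟩ := hz
  have hB := notMem_support_of_mem_bdriesOf hmax
  exact ⟨hB, inducedH_injective _ (bdriesOf_le_bdriesOf_erase hzK hσz),
    inducedH_not_surjective _ (Finset.notMem_erase σ K) hB hzK hσz⟩

/-- if `σ` is a maximal simplex of `K` contained in some cycle of `K`,
then `σ` lies in no boundary of `K`, and `H(K∖{σ}) → H(K)` is injective but not
surjective. -/
theorem stmt14 (K : Finset Simplex) (hK : IsComplex K) (σ : Simplex) (hσ : σ ∈ K)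
    (hmax : ∀ τ ∈ K, σ ⊆ τ → τ = σ)
    (hz : ∃ z ∈ cyclesOf K, σ ∈ z.support) :
    (∀ c ∈ bdriesOf K, σ ∉ c.support) ∧
    Function.Injective (inducedH (eraseSubset K σ)) ∧
    ¬ Function.Surjective (inducedH (eraseSubset K σ)) :=
  stmt14_general K σ hmax hz
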